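/- arXiv:2510.20779 — 5 statements merged into one kernel-verified Lean document; each statement's English description precedes it below -/
import Mathlib

section
/- The negative continued fraction expansion with all entries ≤ -2 is unique: if [a_0,...,a_n] = [b_0,...,b_m] as rationals, with all a_i, b_j integers ≤ -2, then n = m and a_i = b_i for all i. -/
/-!
Entries `≤ -2` force every tail value `ncf l` to be `0` (empty tail) or `< -1`, so
`(ncf l)⁻¹ ∈ (-1, 0]` and the leading entry is recovered as `⌊ncf (a :: l)⌋ = a`.
Peeling off leading entries one at a time shows that `ncf` is injective on such lists,
the empty list included.
-/

/-- Negative continued fraction: `ncf [a₀, a₁, …, aₙ] = a₀ - 1/(a₁ - 1/(⋯ - 1/aₙ))`. -/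
def ncf : List ℤ → ℚ
  | [] => 0
  | a :: l => (a : ℚ) - (ncf l)⁻¹

theorem inv_ncf_mem_Ioc {l : List ℤ} (hl : ∀ a ∈ l, a ≤ -2) : (ncf l)⁻¹ ∈ Set.Ioc (-1) 0 := by
  induction l with
  | nil => simp [ncf]
  | cons a t ih =>
    obtain ⟨ha, ht⟩ := List.forall_mem_cons.mp hl
    have hinv := ih ht
    have haq : (a : ℚ) ≤ -2 := by exact_mod_cast ha
    have hlt : ncf (a :: t) < -1 := by
      rw [ncf]
      linarith [hinv.1]
    refine ⟨?_, (inv_neg''.mpr (by linarith)).le⟩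
    simpa using (inv_lt_inv_of_neg (by norm_num) (by linarith)).mpr hlt

theorem floor_ncf_cons (a : ℤ) {l : List ℤ} (hl : ∀ x ∈ l, x ≤ -2) : ⌊ncf (a :: l)⌋ = a := by
  obtain ⟨hlo, hhi⟩ := inv_ncf_mem_Ioc hl
  rw [Int.floor_eq_iff, ncf]
  constructor <;> linarith

theorem ncf_cons_ne_zero {a : ℤ} {l : List ℤ} (hl : ∀ x ∈ a :: l, x ≤ -2) : ncf (a :: l) ≠ 0 := by
  obtain ⟨ha, ht⟩ := List.forall_mem_cons.mp hl
  intro h0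
  have := floor_ncf_cons a ht
  rw [h0, Int.floor_zero] at this
  omega

theorem ncf_injOn : Set.InjOn ncf {l | ∀ a ∈ l, a ≤ -2} := by
  intro l₁ hl₁ l₂ hl₂ h
  induction l₁ generalizing l₂ with
  | nil =>
    cases l₂ with
    | nil => rfl
    | cons b t => exact absurd h.symm (ncf_cons_ne_zero hl₂)
  | cons a t₁ ih =>
    cases l₂ with
    | nil => exact absurd h (ncf_cons_ne_zero hl₁)
    | cons b t₂ =>
      have ht₁ := (List.forall_mem_cons.mp hl₁).2
      have ht₂ := (List.forall_mem_cons.mp hl₂).2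
      have hab : a = b := by rw [← floor_ncf_cons a ht₁, ← floor_ncf_cons b ht₂, h]
      subst hab
      have htail : ncf t₁ = ncf t₂ := inv_injective (by simpa [ncf] using h)
      rw [ih ht₁ ht₂ htail]

theorem ncf_expansion_unique_general (l₁ l₂ : List ℤ)
    (ha₁ : ∀ a ∈ l₁, a ≤ -2) (ha₂ : ∀ a ∈ l₂, a ≤ -2)
    (h : ncf l₁ = ncf l₂) : l₁ = l₂ :=
  ncf_injOn ha₁ ha₂ h

/-- The negative continued fraction expansion with all entries `≤ -2` is unique. -/
theorem ncf_expansion_unique (l₁ l₂ : List ℤ) (h₁ : l₁ ≠ []) (h₂ : l₂ ≠ [])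
    (ha₁ : ∀ a ∈ l₁, a ≤ -2) (ha₂ : ∀ a ∈ l₂, a ≤ -2)
    (h : ncf l₁ = ncf l₂) : l₁ = l₂ :=
  ncf_expansion_unique_general l₁ l₂ ha₁ ha₂ h
end

section
/- Define a Farey edge between reduced fractions r = a/b and s = c/d (allowing ∞ = 1/0) by |ad - bc| = 1. If -p/q = [a_0, ..., a_n] is the negative continued fraction expansion with all entries ≤ -2 and n ≥ 1, then there is a Farey edge between -p/q and [a_0, ..., a_{n-1}], and there is a Farey edge between -p/q and [a_0, ..., a_n + 1]. -/
/-- Two (reduced) rationals are joined by an edge in the Farey graph iff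
`|ad - bc| = 1` for their numerators and denominators. -/
def fareyEdge (r s : ℚ) : Prop :=
  |r.num * (s.den : ℤ) - (r.den : ℤ) * s.num| = 1

@[simp] lemma ncf_singleton (a : ℤ) : ncf [a] = a := by simp [ncf]

lemma Rat.intCast_sub_num (n : ℤ) (q : ℚ) : (n - q).num = n * q.den - q.num := by
  have h := Rat.mul_den_eq_num (n - q)
  rw [Rat.intCast_sub_den, sub_mul, Rat.mul_den_eq_num] at h
  exact_mod_cast h.symm

lemma Rat.den_inv_eq_sign_mul_num {q : ℚ} (hq : q ≠ 0) :
    (q⁻¹.den : ℤ) = q.num.sign * q.num := by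
  rw [Rat.den_inv_of_ne_zero hq, Int.natCast_natAbs, Int.sign_mul_self_eq_abs]

lemma fareyEdge_intCast_sub_iff (b : ℤ) (r s : ℚ) :
    fareyEdge (b - r) (b - s) ↔ fareyEdge r s := by
  unfold fareyEdge
  rw [Rat.intCast_sub_num, Rat.intCast_sub_num, Rat.intCast_sub_den, Rat.intCast_sub_den,
    ← abs_neg]
  ring_nf

lemma fareyEdge_inv_iff {r s : ℚ} (hr : r ≠ 0) (hs : s ≠ 0) :
    fareyEdge r⁻¹ s⁻¹ ↔ fareyEdge r s := by
  unfold fareyEdge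
  rw [Rat.num_inv, Rat.num_inv, Rat.den_inv_eq_sign_mul_num hr, Rat.den_inv_eq_sign_mul_num hs]
  have hsign : |r.num.sign * s.num.sign| = 1 := by
    rw [abs_mul, Int.abs_sign_of_ne_zero (Rat.num_ne_zero.2 hr),
      Int.abs_sign_of_ne_zero (Rat.num_ne_zero.2 hs), one_mul]
  calc _ ↔ |r.num.sign * s.num.sign| * |r.num * s.den - r.den * s.num| = 1 := by
        rw [← abs_neg, ← abs_mul]; ring_nf
    _ ↔ _ := by rw [hsign, one_mul]

lemma fareyEdge_inv_intCast_zero {a : ℤ} (ha : a ≠ 0) : fareyEdge (a : ℚ)⁻¹ 0 := by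
  simp [fareyEdge, Int.abs_sign_of_ne_zero ha]

lemma fareyEdge_intCast_intCast_add_one (a : ℤ) : fareyEdge a ((a + 1 : ℤ) : ℚ) := by
  simp only [fareyEdge, Rat.num_intCast, Rat.den_intCast]
  norm_num

lemma fareyEdge_ncf_pair_singleton (b : ℤ) {a : ℤ} (ha : a ≠ 0) :
    fareyEdge (ncf [b, a]) (ncf [b]) := by
  change fareyEdge (b - (ncf [a])⁻¹) (b - (ncf [])⁻¹)
  rw [fareyEdge_intCast_sub_iff, ncf_singleton, ncf, inv_zero]
  exact fareyEdge_inv_intCast_zero ha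

lemma ncf_append_le_neg_one {l : List ℤ} (hl : ∀ b ∈ l, b ≤ -2) {u : List ℤ}
    (hu : ncf u ≤ -1) : ncf (l ++ u) ≤ -1 := by
  induction l with
  | nil => exact hu
  | cons b l ih =>
    have hb : (b : ℚ) ≤ -2 := by exact_mod_cast hl b List.mem_cons_self
    have hx : ncf (l ++ u) ≤ -1 := ih fun c hc => hl c (List.mem_cons_of_mem b hc)
    have hinv : -1 ≤ (ncf (l ++ u))⁻¹ := by
      rw [le_inv_of_neg (by norm_num) (by linarith)]
      simpa using hx
    simp only [List.cons_append, ncf]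
    linarith

lemma fareyEdge_ncf_append {l : List ℤ} (hl : ∀ b ∈ l, b ≤ -2) {u v : List ℤ}
    (hu : ncf u ≤ -1) (hv : ncf v ≤ -1) (h : fareyEdge (ncf u) (ncf v)) :
    fareyEdge (ncf (l ++ u)) (ncf (l ++ v)) := by
  induction l with
  | nil => exact h
  | cons b l ih =>
    have hl' : ∀ c ∈ l, c ≤ -2 := fun c hc => hl c (List.mem_cons_of_mem b hc)
    have hu' := ncf_append_le_neg_one hl' hu
    have hv' := ncf_append_le_neg_one hl' hv
    simp only [List.cons_append, ncf]
    rw [fareyEdge_intCast_sub_iff, fareyEdge_inv_iff (by linarith) (by linarith)]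
    exact ih hl'

theorem farey_edge_neighbors_general (l : List ℤ) (a : ℤ) (hl : l ≠ [])
    (ha : ∀ b ∈ l ++ [a], b ≤ -2) :
    fareyEdge (ncf (l ++ [a])) (ncf l) ∧
      fareyEdge (ncf (l ++ [a])) (ncf (l ++ [a + 1])) := by
  have hla : ∀ b ∈ l, b ≤ -2 := fun b hb => ha b (List.mem_append_left _ hb)
  have ha' : a ≤ -2 := ha a (List.mem_append_right _ (List.mem_singleton_self a))
  have hu : ncf [a] ≤ -1 := by rw [ncf_singleton]; exact_mod_cast (by omega : a ≤ -1)
  refine ⟨?_, ?_⟩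
  · obtain ⟨l', b, rfl⟩ := (List.eq_nil_or_concat' l).resolve_left hl
    have hb : b ≤ -2 := hla b (by simp)
    have hv : ncf [b] ≤ -1 := by rw [ncf_singleton]; exact_mod_cast (by omega : b ≤ -1)
    have hbu : ncf ([b] ++ [a]) ≤ -1 := ncf_append_le_neg_one (by simpa using hb) hu
    rw [List.append_assoc]
    exact fareyEdge_ncf_append (fun c hc => hla c (by simp [hc])) hbu hv
      (fareyEdge_ncf_pair_singleton b (by omega))
  · have hv : ncf [a + 1] ≤ -1 := by
      rw [ncf_singleton]; exact_mod_cast (by omega : a + 1 ≤ -1)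
    exact fareyEdge_ncf_append hla hu hv (by simpa using fareyEdge_intCast_intCast_add_one a)

/-- If `-p/q = [a₀, …, aₙ]` with all entries `≤ -2` and `n ≥ 1`, then `-p/q`
has a Farey edge to the truncation `[a₀, …, a_{n-1}]` and to the modification
`[a₀, …, aₙ + 1]`. -/
theorem farey_edge_neighbors (l : List ℤ) (a : ℤ) (hl : l ≠ [])
    (ha : ∀ b ∈ l ++ [a], b ≤ -2)
    (p q : ℤ) (hq : 1 ≤ q) (hpq : q < p) (hcop : Int.gcd p q = 1)
    (hval : ncf (l ++ [a]) = -(p : ℚ) / q) :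
    fareyEdge (ncf (l ++ [a])) (ncf l) ∧
      fareyEdge (ncf (l ++ [a])) (ncf (l ++ [a + 1])) :=
  farey_edge_neighbors_general l a hl ha
end

section
/- Suppose q/p < -1 has negative continued fraction expansion [a_0, ..., a_n] with all entries ≤ -2. Then [a_0, ..., a_n + 1] > [a_0, ..., a_n], and if r/s and r'/s' denote these two rationals in reduced form, then |r s' - s r'| = 1, i.e. they have a Farey edge. -/
lemma ncf_aux (b : ℤ) (x : ℚ) (hx : x < 0) :
    ((b : ℚ) - x⁻¹).num = (x.den : ℤ) - b * x.num ∧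
      (((b : ℚ) - x⁻¹).den : ℤ) = -x.num := by
  have hn : x.num < 0 := Rat.num_neg.mpr hx
  have hx0 : (x.num : ℚ) ≠ 0 := by exact_mod_cast hn.ne
  have hd0 : (x.den : ℚ) ≠ 0 := by exact_mod_cast x.den_nz
  have hxne : x ≠ 0 := hx.ne
  have hx' : (x.num : ℚ) = x * x.den := (div_eq_iff hd0).mp (Rat.num_div_den x)
  have hrepr : (b : ℚ) - x⁻¹ = (((x.den : ℤ) - b * x.num : ℤ) : ℚ) / ((-x.num : ℤ) : ℚ) := by
    rw [eq_div_iff (by push_cast; exact neg_ne_zero.mpr hx0)]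
    push_cast
    rw [hx']
    field_simp
    ring
  have hpos : (0 : ℤ) < -x.num := by omega
  have hc : IsCoprime ((x.den : ℤ)) x.num := by
    rw [Int.isCoprime_iff_gcd_eq_one]
    simpa [Int.gcd, Nat.coprime_comm] using x.reduced
  have hc2 : IsCoprime ((x.den : ℤ) - b * x.num) (-x.num) := by
    have := (hc.add_mul_right_left (-b)).neg_right
    rw [show (x.den : ℤ) + -b * x.num = (x.den : ℤ) - b * x.num by ring] at this
    exact this
  have hcop : Nat.Coprime ((x.den : ℤ) - b * x.num).natAbs (-x.num).natAbs :=
    Int.isCoprime_iff_gcd_eq_one.mp hc2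
  constructor
  · rw [hrepr]; exact Rat.num_div_eq_of_coprime hpos hcop
  · rw [hrepr]; exact Rat.den_div_eq_of_coprime hpos hcop

lemma ncf_key (l : List ℤ) (a : ℤ) (hl : ∀ b ∈ l, b ≤ -2) (ha : a ≤ -2) :
    ncf (l ++ [a]) < ncf (l ++ [a + 1]) ∧ ncf (l ++ [a + 1]) ≤ -1 ∧
      |(ncf (l ++ [a])).num * ((ncf (l ++ [a + 1])).den : ℤ)
        - ((ncf (l ++ [a])).den : ℤ) * (ncf (l ++ [a + 1])).num| = 1 := by
  induction l with
  | nil =>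
      have e1 : ncf ([] ++ [a]) = ((a : ℤ) : ℚ) := by simp [ncf]
      have e2 : ncf ([] ++ [a + 1]) = ((a + 1 : ℤ) : ℚ) := by simp [ncf]
      rw [e1, e2]
      refine ⟨by exact_mod_cast (by omega : a < a + 1), ?_, ?_⟩
      · exact_mod_cast (by omega : a + 1 ≤ -1)
      · rw [Rat.num_intCast, Rat.num_intCast, Rat.den_intCast, Rat.den_intCast]
        rw [show a * ((1 : ℕ) : ℤ) - ((1 : ℕ) : ℤ) * (a + 1) = -1 by push_cast; ring]
        norm_num
  | cons b t ih =>
      obtain ⟨h1, h2, h3⟩ := ih (fun c hc => hl c (List.mem_cons_of_mem _ hc))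
      set r := ncf (t ++ [a]) with hr
      set s := ncf (t ++ [a + 1]) with hs
      have hb : b ≤ -2 := hl b List.mem_cons_self
      have hbq : (b : ℚ) ≤ -2 := by exact_mod_cast hb
      have hsneg : s < 0 := lt_of_le_of_lt h2 (by norm_num)
      have hrneg : r < 0 := lt_trans h1 hsneg
      have hcs : ncf ((b :: t) ++ [a + 1]) = (b : ℚ) - s⁻¹ := rfl
      have hcr : ncf ((b :: t) ++ [a]) = (b : ℚ) - r⁻¹ := rfl
      have hinv : s⁻¹ < r⁻¹ := (inv_lt_inv_of_neg hsneg hrneg).mpr h1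
      have hsinv : (-1 : ℚ) ≤ s⁻¹ := by
        have := (inv_le_inv_of_neg (by norm_num : (-1 : ℚ) < 0) hsneg).mpr h2
        simpa [inv_neg] using this
      obtain ⟨hnr, hdr⟩ := ncf_aux b r hrneg
      obtain ⟨hns, hds⟩ := ncf_aux b s hsneg
      refine ⟨by rw [hcr, hcs]; linarith, by rw [hcs]; linarith, ?_⟩
      rw [hcr, hcs, hnr, hdr, hns, hds]
      rw [show ((r.den : ℤ) - b * r.num) * (-s.num) - (-r.num) * ((s.den : ℤ) - b * s.num)
        = r.num * (s.den : ℤ) - (r.den : ℤ) * s.num by ring]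
      exact h3

/-- For an expansion `[a₀, …, aₙ]` with all entries `≤ -2`, the clockwise
neighbor `[a₀, …, aₙ + 1]` is strictly greater than `[a₀, …, aₙ]` and is joined
to it by a Farey edge. -/
theorem clockwise_neighbor (l : List ℤ) (a : ℤ)
    (ha : ∀ b ∈ l ++ [a], b ≤ -2) :
    ncf (l ++ [a]) < ncf (l ++ [a + 1]) ∧
      fareyEdge (ncf (l ++ [a])) (ncf (l ++ [a + 1])) := by
  obtain ⟨h1, _, h3⟩ := ncf_key l a (fun b hb => ha b (List.mem_append_left _ hb))
    (ha a (List.mem_append_right _ (List.mem_singleton_self _)))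
  exact ⟨h1, h3⟩
end

section
/- For coprime p > q ≥ 1 with -p/q = [a_0, ..., a_n] (entries ≤ -2), the truncation [a_0, ..., a_{n-1}] equals -p'/q' in lowest terms where 1 ≤ p' ≤ p and p'·q ≡ 1 (mod p). -/
open Matrix

def ncfStep (a : ℤ) : Matrix (Fin 2) (Fin 2) ℤ := !![-a, -1; 1, 0]

def ncfMatrix (l : List ℤ) : Matrix (Fin 2) (Fin 2) ℤ := (l.map ncfStep).prod

section Entries

variable (a : ℤ) (l : List ℤ)

lemma ncfMatrix_cons_zero_zero :
    ncfMatrix (a :: l) 0 0 = -a * ncfMatrix l 0 0 - ncfMatrix l 1 0 := by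
  simp [ncfMatrix, ncfStep, mul_apply, Fin.sum_univ_two, sub_eq_add_neg]

lemma ncfMatrix_cons_one_zero : ncfMatrix (a :: l) 1 0 = ncfMatrix l 0 0 := by
  simp [ncfMatrix, ncfStep, mul_apply, Fin.sum_univ_two]

lemma ncfMatrix_append_singleton_zero_one : ncfMatrix (l ++ [a]) 0 1 = -ncfMatrix l 0 0 := by
  simp [ncfMatrix, ncfStep, mul_apply, Fin.sum_univ_two]

lemma ncfMatrix_append_singleton_one_one : ncfMatrix (l ++ [a]) 1 1 = -ncfMatrix l 1 0 := by
  simp [ncfMatrix, ncfStep, mul_apply, Fin.sum_univ_two]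

lemma ncfMatrix_append_singleton_zero_zero :
    ncfMatrix (l ++ [a]) 0 0 = -a * ncfMatrix l 0 0 + ncfMatrix l 0 1 := by
  simp [ncfMatrix, ncfStep, mul_apply, Fin.sum_univ_two, mul_comm]

end Entries

lemma det_ncfMatrix (l : List ℤ) : (ncfMatrix l).det = 1 := by
  induction l with
  | nil => simp [ncfMatrix]
  | cons a l ih =>
    rw [ncfMatrix, List.map_cons, List.prod_cons, det_mul, ← ncfMatrix, ih, ncfStep,
      det_fin_two_of]
    ring

lemma isCoprime_ncfMatrix_col_zero (l : List ℤ) :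
    IsCoprime (ncfMatrix l 0 0) (ncfMatrix l 1 0) := by
  have h := det_ncfMatrix l
  rw [det_fin_two] at h
  exact ⟨ncfMatrix l 1 1, -ncfMatrix l 0 1, by linear_combination h⟩

lemma neg_ncfMatrix_zero_one_lt (l : List ℤ) (hl : ∀ a ∈ l, a ≤ -2) :
    0 ≤ -ncfMatrix l 0 1 ∧ -ncfMatrix l 0 1 < ncfMatrix l 0 0 := by
  induction l using List.reverseRecOn with
  | nil => simp [ncfMatrix]
  | append_singleton l a ih =>
    obtain ⟨h0, h1⟩ := ih fun b hb => hl b (by simp [hb])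
    have ha : a ≤ -2 := hl a (by simp)
    rw [ncfMatrix_append_singleton_zero_one, ncfMatrix_append_singleton_zero_zero]
    constructor <;> nlinarith

lemma ncfMatrix_zero_zero_pos (l : List ℤ) (hl : ∀ a ∈ l, a ≤ -2) : 0 < ncfMatrix l 0 0 := by
  have := neg_ncfMatrix_zero_one_lt l hl
  omega

lemma ncf_eq_neg_div (l : List ℤ) (hl : ∀ a ∈ l, a ≤ -2) :
    ncf l = -(ncfMatrix l 0 0 : ℚ) / ncfMatrix l 1 0 := by
  induction l with
  | nil => simp [ncf, ncfMatrix] -- `-1 / 0 = 0`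
  | cons a l ih =>
    have hl' : ∀ b ∈ l, b ≤ -2 := fun b hb => hl b (by simp [hb])
    have hpos : (0 : ℚ) < ncfMatrix l 0 0 := by exact_mod_cast ncfMatrix_zero_zero_pos l hl'
    rw [ncf, ih hl', ncfMatrix_cons_zero_zero, ncfMatrix_cons_one_zero]
    push_cast
    field_simp
    ring

theorem truncation_is_inverse_residue_general (l : List ℤ) (a : ℤ)
    (ha : ∀ b ∈ l ++ [a], b ≤ -2)
    (p q : ℤ) (hq : 1 ≤ q) (hpq : q < p) (hcop : Int.gcd p q = 1)
    (hval : ncf (l ++ [a]) = -(p : ℚ) / q) :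
    ∃ p' q' : ℤ, 1 ≤ p' ∧ p' ≤ p ∧ p' * q ≡ 1 [ZMOD p] ∧
      Int.gcd p' q' = 1 ∧ ncf l = -(p' : ℚ) / q' := by
  have hl : ∀ b ∈ l, b ≤ -2 := fun b hb => ha b (by simp [hb])
  obtain ⟨hq', hp'⟩ : ncfMatrix (l ++ [a]) 1 0 = q ∧ ncfMatrix (l ++ [a]) 0 0 = p := by
    refine Rat.div_int_inj (ncfMatrix_zero_zero_pos _ ha) (by omega) ?_ (Nat.Coprime.symm hcop) ?_
    · exact Int.isCoprime_iff_gcd_eq_one.mp (isCoprime_ncfMatrix_col_zero _).symm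
    · rw [ncf_eq_neg_div _ ha, neg_div, neg_div, neg_inj] at hval
      rw [← inv_div, hval, inv_div]
  have hdet := det_ncfMatrix (l ++ [a])
  rw [det_fin_two, ncfMatrix_append_singleton_zero_one, ncfMatrix_append_singleton_one_one,
    hp', hq'] at hdet
  have hlt := (neg_ncfMatrix_zero_one_lt _ ha).2
  rw [ncfMatrix_append_singleton_zero_one, neg_neg, hp'] at hlt
  refine ⟨ncfMatrix l 0 0, ncfMatrix l 1 0, ncfMatrix_zero_zero_pos l hl, hlt.le, ?_, ?_,
    ncf_eq_neg_div l hl⟩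
  · exact Int.modEq_iff_dvd.mpr ⟨-ncfMatrix l 1 0, by linear_combination -hdet⟩
  · exact Int.isCoprime_iff_gcd_eq_one.mp (isCoprime_ncfMatrix_col_zero l)

/-- If `-p/q = [a₀, …, aₙ]` (entries `≤ -2`, `n ≥ 1`), then the truncation
`[a₀, …, a_{n-1}]` equals `-p'/q'` in lowest terms, where `1 ≤ p' ≤ p` and
`p' * q ≡ 1 (mod p)`. -/
theorem truncation_is_inverse_residue (l : List ℤ) (a : ℤ) (hl : l ≠ [])
    (ha : ∀ b ∈ l ++ [a], b ≤ -2)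
    (p q : ℤ) (hq : 1 ≤ q) (hpq : q < p) (hcop : Int.gcd p q = 1)
    (hval : ncf (l ++ [a]) = -(p : ℚ) / q) :
    ∃ p' q' : ℤ, 1 ≤ p' ∧ p' ≤ p ∧ p' * q ≡ 1 [ZMOD p] ∧
      Int.gcd p' q' = 1 ∧ ncf l = -(p' : ℚ) / q' :=
  truncation_is_inverse_residue_general l a ha p q hq hpq hcop hval
end

section
/- For coprime p > q ≥ 1 with -p/q = [a_0, ..., a_n] (entries ≤ -2, n ≥ 1), the modification [a_0, ..., a_n + 1] equals -p''/q'' in lowest terms where 1 ≤ p'' ≤ p and p''·q ≡ p - 1 (mod p). -/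
/-- The continuant pair `(P, Q)` with `ncf l = -P / Q`; the empty list stands for `∞ = -1/0`. -/
def ncfNumDen : List ℤ → ℤ × ℤ
  | [] => (1, 0)
  | a :: l => (-a * (ncfNumDen l).1 - (ncfNumDen l).2, (ncfNumDen l).1)

lemma ncfNumDen_cons (a : ℤ) (l : List ℤ) :
    ncfNumDen (a :: l) = (-a * (ncfNumDen l).1 - (ncfNumDen l).2, (ncfNumDen l).1) := rfl

lemma ncfNumDen_append_singleton_bounds {l : List ℤ} {x : ℤ} (hl : ∀ b ∈ l, b ≤ -2)
    (hx : x ≤ -1) :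
    0 < (ncfNumDen (l ++ [x])).2 ∧ (ncfNumDen (l ++ [x])).2 ≤ (ncfNumDen (l ++ [x])).1 := by
  induction l with
  | nil => simp only [List.nil_append, ncfNumDen]; omega
  | cons c l ih =>
    obtain ⟨hQ, hQP⟩ := ih fun b hb => hl b (List.mem_cons_of_mem c hb)
    have hc : c ≤ -2 := hl c List.mem_cons_self
    rw [List.cons_append, ncfNumDen_cons]
    constructor <;> dsimp only <;> nlinarith

lemma ncfNumDen_fst_pos {l : List ℤ} (hl : ∀ b ∈ l, b ≤ -2) : 0 < (ncfNumDen l).1 := by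
  rcases l.eq_nil_or_concat' with rfl | ⟨L, b, rfl⟩
  · simp [ncfNumDen]
  · have hb : b ≤ -2 := hl b (by simp)
    have := ncfNumDen_append_singleton_bounds (l := L) (fun c hc => hl c (by simp [hc]))
      (by omega : b ≤ -1)
    omega

lemma ncf_append_singleton {l : List ℤ} {x : ℤ} (hl : ∀ b ∈ l, b ≤ -2) (hx : x ≤ -1) :
    ncf (l ++ [x]) = -((ncfNumDen (l ++ [x])).1 : ℚ) / (ncfNumDen (l ++ [x])).2 := by
  induction l with
  | nil => simp [ncf, ncfNumDen]
  | cons c l ih =>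
    have hl' : ∀ b ∈ l, b ≤ -2 := fun b hb => hl b (List.mem_cons_of_mem c hb)
    have hP : ((ncfNumDen (l ++ [x])).1 : ℚ) ≠ 0 := by
      have := ncfNumDen_append_singleton_bounds hl' hx
      exact_mod_cast (by omega : (ncfNumDen (l ++ [x])).1 ≠ 0)
    rw [List.cons_append, ncf, ih hl', ncfNumDen_cons]
    field_simp
    push_cast
    ring

lemma ncfNumDen_append_singleton_add_one (l : List ℤ) (a : ℤ) :
    ncfNumDen (l ++ [a + 1]) = ncfNumDen (l ++ [a]) - ncfNumDen l := by
  induction l with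
  | nil => simp only [List.nil_append, ncfNumDen, Prod.mk_sub_mk]; ring_nf
  | cons c l ih =>
    simp only [List.cons_append, ncfNumDen_cons, ih, Prod.fst_sub, Prod.snd_sub, Prod.mk_sub_mk]
    ring_nf

lemma ncfNumDen_det (l : List ℤ) (a : ℤ) :
    (ncfNumDen l).1 * (ncfNumDen (l ++ [a])).2 - (ncfNumDen (l ++ [a])).1 * (ncfNumDen l).2
      = 1 := by
  induction l with
  | nil => simp [ncfNumDen]
  | cons c l ih =>
    simp only [List.cons_append, ncfNumDen_cons]
    linear_combination ih

lemma ncfNumDen_append_singleton_gcd (l : List ℤ) (a : ℤ) :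
    Int.gcd (ncfNumDen (l ++ [a])).1 (ncfNumDen (l ++ [a])).2 = 1 :=
  Int.isCoprime_iff_gcd_eq_one.mp
    ⟨-(ncfNumDen l).2, (ncfNumDen l).1, by linear_combination ncfNumDen_det l a⟩

theorem modification_is_neg_inverse_residue_general (l : List ℤ) (a : ℤ)
    (ha : ∀ b ∈ l ++ [a], b ≤ -2)
    (p q : ℤ) (hq : 1 ≤ q) (hcop : Int.gcd p q = 1)
    (hval : ncf (l ++ [a]) = -(p : ℚ) / q) :
    ∃ p'' q'' : ℤ, 1 ≤ p'' ∧ p'' ≤ p ∧ p'' * q ≡ p - 1 [ZMOD p] ∧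
      Int.gcd p'' q'' = 1 ∧ ncf (l ++ [a + 1]) = -(p'' : ℚ) / q'' := by
  have hl : ∀ b ∈ l, b ≤ -2 := fun b hb => ha b (by simp [hb])
  have ha' : a ≤ -2 := ha a (by simp)
  obtain ⟨hP, hQ⟩ : (ncfNumDen (l ++ [a])).1 = p ∧ (ncfNumDen (l ++ [a])).2 = q := by
    refine Rat.div_int_inj (ncfNumDen_append_singleton_bounds hl (by omega)).1 (by omega)
      (ncfNumDen_append_singleton_gcd l a) hcop ?_
    simpa [ncf_append_singleton hl (by omega : a ≤ -1), neg_div] using hval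
  have hsub := ncfNumDen_append_singleton_add_one l a
  refine ⟨(ncfNumDen (l ++ [a + 1])).1, (ncfNumDen (l ++ [a + 1])).2, ?_, ?_, ?_,
    ncfNumDen_append_singleton_gcd l (a + 1), ncf_append_singleton hl (by omega)⟩
  · have := ncfNumDen_append_singleton_bounds hl (by omega : a + 1 ≤ -1)
    omega
  · have := ncfNumDen_fst_pos hl
    rw [hsub, Prod.fst_sub]
    omega
  · rw [hsub, Prod.fst_sub, ← hP, ← hQ]
    exact Int.modEq_iff_dvd.mpr
      ⟨1 - (ncfNumDen (l ++ [a])).2 + (ncfNumDen l).2, by linear_combination ncfNumDen_det l a⟩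

/-- If `-p/q = [a₀, …, aₙ]` (entries `≤ -2`, `n ≥ 1`), then the modification
`[a₀, …, aₙ + 1]` equals `-p''/q''` in lowest terms, where `1 ≤ p'' ≤ p` and
`p'' * q ≡ p - 1 (mod p)`. -/
theorem modification_is_neg_inverse_residue (l : List ℤ) (a : ℤ) (hl : l ≠ [])
    (ha : ∀ b ∈ l ++ [a], b ≤ -2)
    (p q : ℤ) (hq : 1 ≤ q) (hpq : q < p) (hcop : Int.gcd p q = 1)
    (hval : ncf (l ++ [a]) = -(p : ℚ) / q) :
    ∃ p'' q'' : ℤ, 1 ≤ p'' ∧ p'' ≤ p ∧ p'' * q ≡ p - 1 [ZMOD p] ∧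
      Int.gcd p'' q'' = 1 ∧ ncf (l ++ [a + 1]) = -(p'' : ℚ) / q'' :=
  modification_is_neg_inverse_residue_general l a ha p q hq hcop hval
end
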